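/- arXiv:1206.2420 — 2 statements merged into one kernel-verified Lean document; each statement's English description precedes it below -/
import Mathlib

section
/- Let p be a prime and let s be a rational prime, s ≠ p, such that s is not a p-th power modulo p². Let ζ be a primitive p-th root of unity, k = ℚ(ζ), and q a prime with q ≡ 1 (mod p²). Define τ₁(s), τ₂(s), τ₃(s) as the gcd of the inertia degrees of primes above s in the extensions K₁ = k(ζ^{1/p}), K₂ = k(q^{1/p}), K₃ = k((ζq)^{1/p}) respectively. Then at most one of τ₁(s), τ₂(s), τ₃(s) is prime to p. -/
open NumberField

/-- `TauCoprime p K s` says that the gcd `τ(s)` of the inertia degrees of the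
primes of the number field `K` above the rational prime `s` is coprime to the
prime `p`.  (Since `p` is prime, this holds iff some prime of `K` above `s` has
inertia degree not divisible by `p`.) -/
def TauCoprime (p : ℕ) (K : Type*) [Field K] [NumberField K] (s : ℕ) : Prop :=
  ∃ P : Ideal (𝓞 K), P.IsMaximal ∧ (s : 𝓞 K) ∈ P ∧
    ¬ p ∣ Ideal.inertiaDeg' (Ideal.span {(s : ℤ)}) P

/-!
Let `𝔽` be a residue field above `s` whose degree `f` over `𝔽ₛ` is prime to `p`. If some
primitive `p`-th root of unity is a `p`-th power in `𝔽`, then `𝔽ˣ` has an element of order `p²`,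
so `s ^ f ≡ 1 [MOD p²]`, and since `p ∤ f` this makes `s` a `p`-th power modulo `p²`; this
rules out `K₁`. If `q` is a `p`-th power in such a residue field of `K₂`, taking norms down to `𝔽ₛ`
shows that it is already a `p`-th power in `𝔽ₛ`. Then `ζ = (ζq) / q` is a `p`-th power in every
residue field of `K₃` above `s`, which rules out `K₃` as for `K₁`.
-/

theorem exists_pow_eq_of_pow_eq_pow_of_coprime {M : Type*} [CommMonoid M] {x u : M} {p f : ℕ}
    (hx : IsUnit x) (hpf : p.Coprime f) (h : x ^ f = u ^ p) : ∃ w, w ^ p = x := by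
  obtain rfl | hp := eq_or_ne p 0
  · rw [(Nat.coprime_zero_left f).mp hpf, pow_one, pow_zero] at h
    exact ⟨1, by rw [pow_zero, h]⟩
  obtain ⟨x, rfl⟩ := hx
  obtain ⟨u, rfl⟩ := (isUnit_pow_iff hp).mp (h ▸ x.isUnit.pow f)
  replace h : x ^ f = u ^ p := Units.ext (by simpa using h)
  have bezout : (f : ℤ) * f.gcdA p + p * f.gcdB p = 1 := by
    rw [← Nat.gcd_eq_gcd_ab, Nat.Coprime.gcd_eq_one hpf.symm, Nat.cast_one]
  refine ⟨↑(u ^ f.gcdA p * x ^ f.gcdB p), ?_⟩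
  rw [← Units.val_pow_eq_pow_val]
  congr 1
  calc (u ^ f.gcdA p * x ^ f.gcdB p) ^ p
      = (u ^ p) ^ f.gcdA p * x ^ ((p : ℤ) * f.gcdB p) := by
        rw [mul_pow, ← zpow_natCast, ← zpow_natCast, ← zpow_natCast, ← zpow_mul, ← zpow_mul,
          ← zpow_mul, mul_comm (f.gcdA p), mul_comm (f.gcdB p)]
    _ = x ^ ((f : ℤ) * f.gcdA p + p * f.gcdB p) := by
        rw [← h, ← zpow_natCast, ← zpow_mul, zpow_add]
    _ = x := by rw [bezout, zpow_one]

theorem exists_pow_eq_of_pow_eq_algebraMap {K L : Type*} [Field K] [Field L] [Algebra K L]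
    [FiniteDimensional K L] {p : ℕ} (hp : p.Coprime (Module.finrank K L)) {x : K} (hx : x ≠ 0)
    {y : L} (hy : y ^ p = algebraMap K L x) : ∃ t : K, t ^ p = x :=
  exists_pow_eq_of_pow_eq_pow_of_coprime hx.isUnit hp
    (by rw [← Algebra.norm_algebraMap, ← hy, map_pow])

theorem exists_pow_mod_sq_eq_of_sq_dvd_pow_sub_one {p s f : ℕ} (hp : p.Prime) (hf : ¬ p ∣ f)
    (hs : 0 < s) (h : p ^ 2 ∣ s ^ f - 1) : ∃ t : ℕ, t ^ p % p ^ 2 = s % p ^ 2 := by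
  have hsf : (s : ZMod (p ^ 2)) ^ f = 1 := by
    have := (ZMod.natCast_eq_natCast_iff _ _ _).mpr
      ((Nat.modEq_iff_dvd' (Nat.one_le_pow _ _ hs)).mpr h)
    exact_mod_cast this.symm
  have hf0 : f ≠ 0 := by rintro rfl; exact hf (dvd_zero p)
  obtain ⟨w, hw⟩ := exists_pow_eq_of_pow_eq_pow_of_coprime (IsUnit.of_pow_eq_one hsf hf0)
    ((Nat.Prime.coprime_iff_not_dvd hp).mpr hf) (u := 1) (by rw [hsf, one_pow])
  have : NeZero (p ^ 2) := ⟨pow_ne_zero 2 hp.ne_zero⟩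
  refine ⟨w.val, (ZMod.natCast_eq_natCast_iff' _ _ _).mp ?_⟩
  rw [Nat.cast_pow, ZMod.natCast_zmod_val, hw]

theorem sq_dvd_card_sub_one_of_isPrimitiveRoot_pow {F : Type*} [Field F] [Fintype F] {p : ℕ}
    (hp : p.Prime) {y : F} (hy : IsPrimitiveRoot (y ^ p) p) : p ^ 2 ∣ Fintype.card F - 1 := by
  have : Fact p.Prime := ⟨hp⟩
  have hy0 : y ≠ 0 := ne_zero_pow hp.ne_zero (hy.ne_zero hp.ne_zero)
  have hord : orderOf y = p ^ 2 :=
    orderOf_eq_prime_pow (n := 1) (by simpa using hy.ne_one hp.one_lt)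
      (by rw [sq, pow_mul, hy.pow_eq_one])
  exact hord ▸ orderOf_dvd_of_pow_eq_one (FiniteField.pow_card_sub_one_eq_one y hy0)

theorem IsPrimitiveRoot.map_of_natCast_ne_zero {R S : Type*} [CommRing R] [IsDomain R]
    [CommRing S] [IsDomain S] (φ : R →+* S) {z : R} {n : ℕ} (hz : IsPrimitiveRoot z n)
    (hn : (n : S) ≠ 0) : IsPrimitiveRoot (φ z) n := by
  have : NeZero (n : S) := ⟨hn⟩
  have hn0 : 0 < n := Nat.pos_of_ne_zero (by rintro rfl; exact hn Nat.cast_zero)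
  rw [← Polynomial.isRoot_cyclotomic_iff, ← Polynomial.map_cyclotomic n φ, Polynomial.IsRoot,
    Polynomial.eval_map, Polynomial.eval₂_hom, (hz.isRoot_cyclotomic hn0).eq_zero, map_zero]

theorem RingOfIntegers.exists_pow_eq_of_pow_eq_coe {K : Type*} [Field K] {n : ℕ} (hn : n ≠ 0)
    {a : K} {b : 𝓞 K} (h : a ^ n = b) : ∃ α : 𝓞 K, α ^ n = b := by
  have ha : IsIntegral ℤ a := IsIntegral.of_pow (Nat.pos_of_ne_zero hn) (h ▸ b.isIntegral_coe)
  exact ⟨⟨a, ha⟩, RingOfIntegers.ext h⟩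

theorem ZMod.exists_pow_eq_of_pow_eq_natCast {F : Type*} [Field F] [Fintype F] {p s f : ℕ}
    (hp : p.Prime) (hs : s.Prime) (hf : ¬ p ∣ f) (hF : Fintype.card F = s ^ f) {n : ℕ}
    (hn : ¬ s ∣ n) {y : F} (hy : y ^ p = n) : ∃ t : ZMod s, t ^ p = n := by
  have : Fact s.Prime := ⟨hs⟩
  have : CharP F s := charP_of_card_eq_prime_pow hF
  let : Algebra (ZMod s) F := ZMod.algebra F s
  have hdeg : Module.finrank (ZMod s) F = f := Nat.pow_right_injective hs.two_le <| by
    dsimp only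
    rw [← hF, Module.card_eq_pow_finrank (K := ZMod s), ZMod.card]
  exact exists_pow_eq_of_pow_eq_algebraMap (hdeg ▸ hp.coprime_iff_not_dvd.mpr hf)
    ((ZMod.natCast_eq_zero_iff n s).not.mpr hn) (by rw [hy, map_natCast])

universe u

namespace TauCoprime

variable {K : Type u} [Field K] [NumberField K] {p s : ℕ}

theorem exists_residueField (hs : s.Prime) (h : TauCoprime p K s) :
    ∃ (F : Type u) (_ : Field F) (_ : Fintype F) (_ : 𝓞 K →+* F) (f : ℕ),
      ¬ p ∣ f ∧ Fintype.card F = s ^ f := by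
  obtain ⟨P, hP, hsP, hf⟩ := h
  have : P.LiesOver (Ideal.span {(s : ℤ)}) :=
    (Ideal.liesOver_span_iff hP.ne_top (Nat.prime_iff_prime_int.mp hs)).mpr (by simpa using hsP)
  have hcard : Nat.card (𝓞 K ⧸ P) = s ^ (Ideal.span {(s : ℤ)}).inertiaDeg' P := by
    rw [← Submodule.cardQuot_apply, ← Ideal.absNorm_apply, Ideal.absNorm_eq_pow_inertiaDeg' P hs]
  have : Finite (𝓞 K ⧸ P) := Nat.finite_of_card_ne_zero (hcard ▸ pow_ne_zero _ hs.ne_zero)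
  let : Fintype (𝓞 K ⧸ P) := Fintype.ofFinite _
  exact ⟨𝓞 K ⧸ P, Ideal.Quotient.field P, inferInstance, Ideal.Quotient.mk P, _, hf,
    Nat.card_eq_fintype_card (α := 𝓞 K ⧸ P) ▸ hcard⟩

theorem exists_zmod_pow_eq_of_pow_eq_natCast (hp : p.Prime) (hs : s.Prime)
    (h : TauCoprime p K s) {n : ℕ} (hn : ¬ s ∣ n) {a : K} (ha : a ^ p = n) :
    ∃ t : ZMod s, t ^ p = n := by
  obtain ⟨F, _, _, φ, f, hf, hF⟩ := h.exists_residueField hs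
  obtain ⟨α, hα⟩ := RingOfIntegers.exists_pow_eq_of_pow_eq_coe hp.ne_zero (a := a) (b := n)
    (by push_cast; exact ha)
  exact ZMod.exists_pow_eq_of_pow_eq_natCast hp hs hf hF hn (y := φ α)
    (by rw [← map_pow, hα, map_natCast])

theorem exists_pow_mod_sq_eq_of_pow_eq_mul (hp : p.Prime) (hs : s.Prime) (hsp : s ≠ p)
    (h : TauCoprime p K s) {z : K} (hz : IsPrimitiveRoot z p) {n : ℕ} (hn : ¬ s ∣ n)
    {t : ZMod s} (ht : t ^ p = n) {a : K} (ha : a ^ p = z * n) :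
    ∃ u : ℕ, u ^ p % p ^ 2 = s % p ^ 2 := by
  obtain ⟨F, _, _, φ, f, hf, hF⟩ := h.exists_residueField hs
  have : Fact s.Prime := ⟨hs⟩
  have : CharP F s := charP_of_card_eq_prime_pow hF
  have : NeZero p := ⟨hp.ne_zero⟩
  obtain ⟨α, hα⟩ := RingOfIntegers.exists_pow_eq_of_pow_eq_coe hp.ne_zero
    (a := a) (b := hz.toInteger * (n : 𝓞 K)) (by push_cast; exact ha)
  have hζ : IsPrimitiveRoot (φ hz.toInteger) p :=
    hz.toInteger_isPrimitiveRoot.map_of_natCast_ne_zero φ <| by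
      rwa [Ne, CharP.cast_eq_zero_iff F s, Nat.prime_dvd_prime_iff_eq hs hp]
  let ι := ZMod.castHom (dvd_refl s) F
  have htp : ι t ^ p = n := by rw [← map_pow, ht, map_natCast]
  have hnF : (n : F) ≠ 0 := by rwa [Ne, CharP.cast_eq_zero_iff F s]
  have hy : (φ α / ι t) ^ p = φ hz.toInteger := by
    rw [div_pow, ← map_pow, hα, htp, map_mul, map_natCast, mul_div_cancel_right₀ _ hnF]
  exact exists_pow_mod_sq_eq_of_sq_dvd_pow_sub_one hp hf hs.pos
    (hF ▸ sq_dvd_card_sub_one_of_isPrimitiveRoot_pow hp (hy ▸ hζ))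

end TauCoprime

theorem stmt_3_general (p s q : ℕ) (hp : p.Prime) (hs : s.Prime) (hsp : s ≠ p)
    (hspow : ¬ ∃ t : ℕ, t ^ p % p ^ 2 = s % p ^ 2)
    (hq : q.Prime) (hq1 : q % p ^ 2 = 1)
    (ζ : CyclotomicField p ℚ) (hζ : IsPrimitiveRoot ζ p)
    (K₁ K₂ K₃ : Type*) [Field K₁] [Field K₂] [Field K₃]
    [NumberField K₁] [NumberField K₂] [NumberField K₃]
    [Algebra (CyclotomicField p ℚ) K₁]
    [Algebra (CyclotomicField p ℚ) K₂]
    [Algebra (CyclotomicField p ℚ) K₃]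
    (a₁ : K₁) (ha₁ : a₁ ^ p = algebraMap _ K₁ ζ)
    (a₂ : K₂) (ha₂ : a₂ ^ p = (q : K₂))
    (a₃ : K₃) (ha₃ : a₃ ^ p = algebraMap _ K₃ ζ * (q : K₃)) :
    ¬ (TauCoprime p K₁ s ∧ TauCoprime p K₂ s) ∧
    ¬ (TauCoprime p K₁ s ∧ TauCoprime p K₃ s) ∧
    ¬ (TauCoprime p K₂ s ∧ TauCoprime p K₃ s) := by
  have hsq : ¬ s ∣ q := by
    rw [Nat.prime_dvd_prime_iff_eq hs hq]
    rintro rfl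
    exact hspow ⟨1, by rw [one_pow, hq1, Nat.one_mod_eq_one.mpr (Nat.one_lt_pow two_ne_zero hp.one_lt).ne']⟩
  have not₁ : ¬ TauCoprime p K₁ s := fun h₁ ↦ hspow <|
    h₁.exists_pow_mod_sq_eq_of_pow_eq_mul hp hs hsp (hζ.map_of_injective (algebraMap _ K₁).injective)
      hs.not_dvd_one (t := 1) (by rw [one_pow, Nat.cast_one]) (by rwa [Nat.cast_one, mul_one])
  refine ⟨fun h ↦ not₁ h.1, fun h ↦ not₁ h.1, ?_⟩
  rintro ⟨h₂, h₃⟩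
  obtain ⟨t, ht⟩ := h₂.exists_zmod_pow_eq_of_pow_eq_natCast hp hs hsq ha₂
  exact hspow <| h₃.exists_pow_mod_sq_eq_of_pow_eq_mul hp hs hsp
    (hζ.map_of_injective (algebraMap _ K₃).injective) hsq ht ha₃

/-- Let `p` be a prime and `s ≠ p` a rational prime which is not a
`p`-th power modulo `p²`.  Let `ζ` be a primitive `p`-th root of unity,
`k = ℚ(ζ)`, and `q ≡ 1 (mod p²)` a prime.  Let `K₁ = k(ζ^{1/p})`,
`K₂ = k(q^{1/p})`, `K₃ = k((ζq)^{1/p})`, and let `τᵢ(s)` be the gcd of the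
inertia degrees of the primes above `s` in `Kᵢ`.  Then at most one of `τ₁(s)`,
`τ₂(s)`, `τ₃(s)` is prime to `p`. -/
theorem stmt_3 (p s q : ℕ) (hp : p.Prime) (hs : s.Prime) (hsp : s ≠ p)
    (hspow : ¬ ∃ t : ℕ, t ^ p % p ^ 2 = s % p ^ 2)
    (hq : q.Prime) (hq1 : q % p ^ 2 = 1)
    (ζ : CyclotomicField p ℚ) (hζ : IsPrimitiveRoot ζ p)
    (K₁ K₂ K₃ : Type*) [Field K₁] [Field K₂] [Field K₃]
    [NumberField K₁] [NumberField K₂] [NumberField K₃]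
    [Algebra (CyclotomicField p ℚ) K₁]
    [Algebra (CyclotomicField p ℚ) K₂]
    [Algebra (CyclotomicField p ℚ) K₃]
    (a₁ : K₁) (ha₁ : a₁ ^ p = algebraMap _ K₁ ζ)
    (hgen₁ : Algebra.adjoin (CyclotomicField p ℚ) ({a₁} : Set K₁) = ⊤)
    (a₂ : K₂) (ha₂ : a₂ ^ p = (q : K₂))
    (hgen₂ : Algebra.adjoin (CyclotomicField p ℚ) ({a₂} : Set K₂) = ⊤)
    (a₃ : K₃) (ha₃ : a₃ ^ p = algebraMap _ K₃ ζ * (q : K₃))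
    (hgen₃ : Algebra.adjoin (CyclotomicField p ℚ) ({a₃} : Set K₃) = ⊤) :
    ¬ (TauCoprime p K₁ s ∧ TauCoprime p K₂ s) ∧
    ¬ (TauCoprime p K₁ s ∧ TauCoprime p K₃ s) ∧
    ¬ (TauCoprime p K₂ s ∧ TauCoprime p K₃ s) :=
  stmt_3_general p s q hp hs hsp hspow hq hq1 ζ hζ K₁ K₂ K₃ a₁ ha₁ a₂ ha₂ a₃ ha₃
end

section
/- Let r be a rational prime, r ∉ {2,5,41}. Consider the four pairs (1,1), (41,5), (-5,-1), (-205,-5) of integers. In the group (ℚ_r^×/ℚ_r^{×2})², the element (1,5) equals one of these four pairs. Consequently, the cocycle class (1,5) ∈ (ℚ^×/ℚ^{×2})² maps, at every finite place and the infinite place of ℚ, into the image of the local 2-torsion Kummer images {(1,1),(41,5),(-5,-1),(-205,-5)} of the curve y² = x(x+80)(x+205). -/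
/-!
Each of the four pairs is matched as soon as a suitable number is a local square: `5`, `41`,
`-5`, or both `-1` and `-205`. Over `ℝ` take `√5`; over `ℚ_2` the number `41 ≡ 1 (mod 8)` is a
square by Hensel's lemma; over `ℚ_5` and `ℚ_41` the numbers `41 ≡ 1²` and `5 ≡ 13²` are
nonzero squares of the residue field, hence squares. For the remaining odd `p` the same lifting
applies to the residue field `𝔽_p`, whose nonzero square classes form a group of order two: if
neither `5` nor `41` is a square there, then `-5` is a square when `-1` is not, and `-205` is
a square when `-1` is.
-/

/-- The pair `(1,5)` agrees, modulo squares (componentwise), with one of the four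
pairs `(1,1)`, `(41,5)`, `(-5,-1)`, `(-205,-5)` in the field `F`; these four pairs
are the images of the 2-torsion points of `y² = x(x+80)(x+205)` under the local
Kummer (connecting) map. -/
def KummerMatch (F : Type*) [Field F] : Prop :=
  ∃ u v : F, u ≠ 0 ∧ v ≠ 0 ∧
    ((1 = u ^ 2 ∧ 5 = v ^ 2) ∨
     (1 = 41 * u ^ 2 ∧ 5 = 5 * v ^ 2) ∨
     (1 = -5 * u ^ 2 ∧ 5 = -v ^ 2) ∨
     (1 = -205 * u ^ 2 ∧ 5 = -5 * v ^ 2))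

open Polynomial

theorem HenselianRing.isSquare_of_isSquare_map {R S : Type*} [CommRing R] [CommRing S]
    (φ : R →+* S) (hφ : Function.Surjective φ) [HenselianRing R (RingHom.ker φ)] {a : R}
    (h2 : IsUnit (2 : S)) (ha : IsUnit (φ a)) (hsq : IsSquare (φ a)) : IsSquare a := by
  obtain ⟨b', hb'⟩ := hsq
  obtain ⟨b, rfl⟩ := hφ b'
  have hb : IsUnit (φ b) := isUnit_of_mul_isUnit_left (hb' ▸ ha)
  have hroot : (X ^ 2 - C a).eval b ∈ RingHom.ker φ := by
    simp [RingHom.mem_ker, hb', sq]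
  have hderiv :
      IsUnit (Ideal.Quotient.mk (RingHom.ker φ) ((X ^ 2 - C a).derivative.eval b)) := by
    rw [← isUnit_map_iff (RingHom.quotientKerEquivOfSurjective hφ)]
    simpa [one_add_one_eq_two, map_ofNat] using h2.mul hb
  obtain ⟨c, hc, -⟩ :=
    HenselianRing.is_henselian _ (monic_X_pow_sub_C a two_ne_zero) b hroot hderiv
  exact ⟨c, by simpa [sub_eq_zero, sq, eq_comm] using hc⟩

theorem PadicInt.isSquare_of_isSquare_toZMod {p : ℕ} [Fact p.Prime] (hp : p ≠ 2) {a : ℤ_[p]}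
    (ha : toZMod a ≠ 0) (hsq : IsSquare (toZMod a)) : IsSquare a := by
  have : HenselianRing ℤ_[p] (RingHom.ker toZMod) := ker_toZMod (p := p) ▸ inferInstance
  refine HenselianRing.isSquare_of_isSquare_map toZMod (ZMod.ringHom_surjective _) ?_
    ha.isUnit hsq
  exact (Ring.two_ne_zero (by rwa [ZMod.ringChar_zmod_n])).isUnit

theorem Padic.isSquare_intCast_of_isSquare_zmod {p : ℕ} [Fact p.Prime] (hp : p ≠ 2) {n : ℤ}
    (hn : (n : ZMod p) ≠ 0) (hsq : IsSquare (n : ZMod p)) : IsSquare (n : ℚ_[p]) := by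
  have h := PadicInt.isSquare_of_isSquare_toZMod hp (a := n) (by simpa) (by simpa)
  simpa using h.map PadicInt.Coe.ringHom

theorem PadicInt.isSquare_intCast_of_modEq_one {a : ℤ} (ha : a ≡ 1 [ZMOD 8]) :
    IsSquare (a : ℤ_[2]) := by
  have h2 : ‖(2 : ℤ_[2])‖ = 2⁻¹ := by simpa using norm_p (p := 2)
  have hnorm : ‖(X ^ 2 - C a : ℤ[X]).aeval (1 : ℤ_[2])‖ <
      ‖(X ^ 2 - C a : ℤ[X]).derivative.aeval (1 : ℤ_[2])‖ ^ 2 :=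
    calc ‖(X ^ 2 - C a : ℤ[X]).aeval (1 : ℤ_[2])‖ = ‖((1 - a : ℤ) : ℤ_[2])‖ := by simp
      _ ≤ (2 : ℝ) ^ (-(3 : ℕ) : ℤ) := norm_int_le_pow_iff_dvd.mpr (by simpa using ha.dvd)
      _ < ‖(2 : ℤ_[2])‖ ^ 2 := by rw [h2]; norm_num
      _ = ‖(X ^ 2 - C a : ℤ[X]).derivative.aeval (1 : ℤ_[2])‖ ^ 2 := by
        simp [one_add_one_eq_two, map_ofNat]
  obtain ⟨c, hc, -⟩ := hensels_lemma hnorm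
  exact ⟨c, by simpa [sub_eq_zero, sq, eq_comm] using hc⟩

theorem FiniteField.isSquare_mul_of_not_isSquare {F : Type*} [Field F] [Finite F] {a b : F}
    (ha : ¬IsSquare a) (hb : ¬IsSquare b) : IsSquare (a * b) := by
  classical
  have := Fintype.ofFinite F
  have hab : a * b ≠ 0 :=
    mul_ne_zero (by rintro rfl; exact ha ⟨0, by simp⟩) (by rintro rfl; exact hb ⟨0, by simp⟩)
  rw [← quadraticChar_one_iff_isSquare hab, map_mul,
    quadraticChar_neg_one_iff_not_isSquare.mpr ha, quadraticChar_neg_one_iff_not_isSquare.mpr hb]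
  norm_num

theorem kummerMatch_of_isSquare {F : Type*} [Field F] [CharZero F]
    (h : IsSquare (5 : F) ∨ IsSquare (41 : F) ∨ IsSquare (-5 : F) ∨
      IsSquare (-1 : F) ∧ IsSquare (-205 : F)) : KummerMatch F := by
  rcases h with ⟨v, hv⟩ | ⟨y, hy⟩ | ⟨y, hy⟩ | ⟨⟨v, hv⟩, ⟨y, hy⟩⟩
  · exact ⟨1, v, one_ne_zero, by rintro rfl; norm_num at hv, Or.inl ⟨by ring, by rw [hv, sq]⟩⟩
  all_goals have hy0 : y ≠ 0 := by rintro rfl; norm_num at hy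
  · refine ⟨y⁻¹, 1, inv_ne_zero hy0, one_ne_zero, Or.inr (Or.inl ⟨?_, by ring⟩)⟩
    field_simp
    rw [hy, sq]
  · refine ⟨y⁻¹, y, inv_ne_zero hy0, hy0, Or.inr (Or.inr (Or.inl ⟨?_, ?_⟩))⟩
    · field_simp
      rw [hy, sq]
    · rw [sq, ← hy]
      ring
  · refine ⟨y⁻¹, v, inv_ne_zero hy0, by rintro rfl; norm_num at hv,
      Or.inr (Or.inr (Or.inr ⟨?_, ?_⟩))⟩
    · field_simp
      rw [hy, sq]
    · rw [sq, ← hv]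
      ring

theorem kummerMatch_padic_of_ne_zero {p : ℕ} [Fact p.Prime] (hp : p ≠ 2)
    (h5 : (5 : ZMod p) ≠ 0) (h41 : (41 : ZMod p) ≠ 0) : KummerMatch ℚ_[p] := by
  have lift : ∀ n : ℤ, (n : ZMod p) ≠ 0 → IsSquare (n : ZMod p) → IsSquare (n : ℚ_[p]) :=
    fun n => Padic.isSquare_intCast_of_isSquare_zmod hp
  apply kummerMatch_of_isSquare
  by_cases hs5 : IsSquare (5 : ZMod p)
  · exact Or.inl (by exact_mod_cast lift 5 (by exact_mod_cast h5) (by exact_mod_cast hs5))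
  by_cases hs41 : IsSquare (41 : ZMod p)
  · exact Or.inr <| Or.inl <|
      by exact_mod_cast lift 41 (by exact_mod_cast h41) (by exact_mod_cast hs41)
  have hs5_41 : IsSquare (5 * 41 : ZMod p) := FiniteField.isSquare_mul_of_not_isSquare hs5 hs41
  by_cases hsm1 : IsSquare (-1 : ZMod p)
  · refine Or.inr <| Or.inr <| Or.inr ⟨by exact_mod_cast lift (-1) (by simp) (by simpa), ?_⟩
    have h205 : ((-205 : ℤ) : ZMod p) = -1 * (5 * 41) := by push_cast; ring
    exact_mod_cast lift (-205)
      (h205 ▸ mul_ne_zero (neg_ne_zero.mpr one_ne_zero) (mul_ne_zero h5 h41))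
      (h205 ▸ hsm1.mul hs5_41)
  · have hsm5 : IsSquare (-1 * 5 : ZMod p) := FiniteField.isSquare_mul_of_not_isSquare hsm1 hs5
    exact Or.inr <| Or.inr <| Or.inl <|
      by exact_mod_cast lift (-5) (by simpa using h5) (by simpa using hsm5)

theorem kummerMatch_padic (p : ℕ) [Fact p.Prime] : KummerMatch ℚ_[p] := by
  rcases eq_or_ne p 2 with rfl | hp2
  · have h := (PadicInt.isSquare_intCast_of_modEq_one (a := 41) rfl).map PadicInt.Coe.ringHom
    exact kummerMatch_of_isSquare (Or.inr (Or.inl (by simpa [map_ofNat] using h)))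
  rcases eq_or_ne p 5 with rfl | hp5
  · have h := Padic.isSquare_intCast_of_isSquare_zmod (p := 5) hp2 (n := 41)
      ((ZMod.intCast_zmod_eq_zero_iff_dvd 41 5).not.mpr (by norm_num)) ⟨1, rfl⟩
    exact kummerMatch_of_isSquare (Or.inr (Or.inl (by exact_mod_cast h)))
  rcases eq_or_ne p 41 with rfl | hp41
  · have h := Padic.isSquare_intCast_of_isSquare_zmod (p := 41) hp2 (n := 5)
      ((ZMod.intCast_zmod_eq_zero_iff_dvd 5 41).not.mpr (by norm_num)) ⟨13, rfl⟩
    exact kummerMatch_of_isSquare (Or.inl (by exact_mod_cast h))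
  exact kummerMatch_padic_of_ne_zero hp2
    (by exact_mod_cast @ZMod.prime_ne_zero p 5 _ ⟨by norm_num⟩ hp5)
    (by exact_mod_cast @ZMod.prime_ne_zero p 41 _ ⟨by norm_num⟩ hp41)

theorem stmt_12_general (r : ℕ) [Fact r.Prime] :
    KummerMatch ℚ_[r] ∧
      (∀ (v : ℕ) [Fact v.Prime], KummerMatch ℚ_[v]) ∧ KummerMatch ℝ :=
  ⟨kummerMatch_padic r, fun v _ => kummerMatch_padic v,
    kummerMatch_of_isSquare (Or.inl ⟨√5, (Real.mul_self_sqrt (by norm_num)).symm⟩)⟩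

/-- For every rational prime `r ∉ {2,5,41}`, the element `(1,5)` of
`(ℚ_r^×/ℚ_r^{×2})²` equals one of the four pairs `(1,1)`, `(41,5)`, `(-5,-1)`,
`(-205,-5)`.  Consequently the class `(1,5)` matches one of these local Kummer
images at every finite place `v` of `ℚ` and at the infinite place. -/
theorem stmt_12 (r : ℕ) [Fact r.Prime] (hr : r ∉ ({2, 5, 41} : Set ℕ)) :
    KummerMatch ℚ_[r] ∧
      (∀ (v : ℕ) [Fact v.Prime], KummerMatch ℚ_[v]) ∧ KummerMatch ℝ :=
  stmt_12_general r
end
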